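/- arXiv:1406.2522 — 8 statements merged into one kernel-verified Lean document; each statement's English description precedes it below -/
import Mathlib

section
/- Let n be a positive integer and let A ∈ M_n(ℂ) be a nonzero matrix. Then the Schur map S_A is multiplicative (with respect to ordinary matrix multiplication) if and only if A_{ii} = 1 for all i and A_{ij} = A_{ik} · A_{kj} for all indices i, j, k. -/
/-! Testing multiplicativity of `S_A` on matrix units `E_ik E_kj = E_ij` gives
`A i j = A i k * A k j`; conversely this identity lets `A i j` be pulled inside each term
`B i k * C k j` of `(B * C) i j`. Since `A ≠ 0`, some `A p q ≠ 0`, so `A p i ≠ 0` and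
`A p i = A p i * A i i` forces `A i i = 1`. -/

open Matrix

namespace Matrix

variable {n R : Type*}

theorem hadamard_single_one [DecidableEq n] [MulZeroOneClass R] (A : Matrix n n R) (i j : n) :
    A ⊙ single i j 1 = single i j (A i j) := by
  ext a b
  by_cases h : i = a ∧ j = b
  · obtain ⟨rfl, rfl⟩ := h
    simp
  · simp [h]

theorem apply_eq_mul_of_hadamard_mul_eq [Fintype n] [DecidableEq n] [Semiring R]
    {A : Matrix n n R} (hA : ∀ B C : Matrix n n R, A ⊙ (B * C) = A ⊙ B * A ⊙ C) (i j k : n) :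
    A i j = A i k * A k j := by
  have h := hA (single i k 1) (single k j 1)
  rw [single_mul_single_same, one_mul, hadamard_single_one, hadamard_single_one,
    hadamard_single_one, single_mul_single_same] at h
  simpa using congrFun (congrFun h i) j

theorem hadamard_mul_eq_of_apply_eq_mul [Fintype n] [CommSemiring R] {A : Matrix n n R}
    (hA : ∀ i j k, A i j = A i k * A k j) (B C : Matrix n n R) :
    A ⊙ (B * C) = A ⊙ B * A ⊙ C := by
  ext i j
  simp only [hadamard_apply, mul_apply, Finset.mul_sum]
  refine Finset.sum_congr rfl fun k _ => ?_
  rw [hA i j k]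
  ring

theorem diag_eq_one_of_apply_eq_mul [MonoidWithZero R] [IsLeftCancelMulZero R]
    {A : Matrix n n R} (hA : A ≠ 0) (hmul : ∀ i j k, A i j = A i k * A k j) (i : n) :
    A i i = 1 := by
  obtain ⟨p, q, hpq⟩ : ∃ p q, A p q ≠ 0 := by
    by_contra! h
    exact hA (ext h)
  have hpi : A p i ≠ 0 := fun h => hpq (by rw [hmul p q i, h, zero_mul])
  exact mul_left_cancel₀ hpi (by rw [mul_one, ← hmul])

end Matrix

theorem schur_multiplicative_iff_general (n : ℕ)
    (A : Matrix (Fin n) (Fin n) ℂ) (hA : A ≠ 0) :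
    (∀ B C : Matrix (Fin n) (Fin n) ℂ,
        Matrix.hadamard A (B * C) = Matrix.hadamard A B * Matrix.hadamard A C) ↔
      ((∀ i, A i i = 1) ∧ ∀ i j k, A i j = A i k * A k j) := by
  constructor
  · intro hS
    have hmul := apply_eq_mul_of_hadamard_mul_eq hS
    exact ⟨diag_eq_one_of_apply_eq_mul hA hmul, hmul⟩
  · rintro ⟨-, hmul⟩
    exact hadamard_mul_eq_of_apply_eq_mul hmul

theorem schur_multiplicative_iff (n : ℕ) (hn : 0 < n)
    (A : Matrix (Fin n) (Fin n) ℂ) (hA : A ≠ 0) :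
    (∀ B C : Matrix (Fin n) (Fin n) ℂ,
        Matrix.hadamard A (B * C) = Matrix.hadamard A B * Matrix.hadamard A C) ↔
      ((∀ i, A i i = 1) ∧ ∀ i j k, A i j = A i k * A k j) :=
  schur_multiplicative_iff_general n A hA
end

section
/- Let n be a positive integer and let A ∈ M_n(ℂ) be a nonzero matrix such that the Schur map S_A is multiplicative. Then S_A is spectrum preserving: for every B ∈ M_n(ℂ), the spectrum of A ∘ B equals the spectrum of B. -/
/-!
Testing multiplicativity of `S_A` on matrix units `E_ik * E_kj = E_ij` gives the cocycle relation
`A i j = A i k * A k j`. If `A p q ≠ 0`, this forces every entry of column `q` to be nonzero and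
`A i j = d i / d j` with `d i = A i q`, so `A ∘ B = D B D⁻¹` for the invertible diagonal matrix
`D = diag d`, and conjugation preserves the spectrum.
-/

open Matrix

namespace Matrix

variable {m α : Type*}

theorem hadamard_single [DecidableEq m] [MulZeroClass α] (A : Matrix m m α) (i j : m) (c : α) :
    A ⊙ single i j c = single i j (A i j * c) := by
  ext k l
  by_cases h : i = k ∧ j = l
  · obtain ⟨rfl, rfl⟩ := h
    simp
  · simp [h]

theorem apply_eq_mul_apply_of_hadamard_mul [Fintype m] [DecidableEq m] [Semiring α]
    (A : Matrix m m α) (hmul : ∀ B C : Matrix m m α, A ⊙ (B * C) = A ⊙ B * A ⊙ C) (i j k : m) :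
    A i j = A i k * A k j := by
  have h := congrFun₂ (hmul (single i k 1) (single k j 1)) i j
  simpa [hadamard_single, single_mul_single_same] using h

theorem exists_units_apply_eq_mul_inv {G₀ : Type*} [GroupWithZero G₀] {A : m → m → G₀}
    (hA : A ≠ 0) (h : ∀ i j k, A i j = A i k * A k j) :
    ∃ d : m → G₀ˣ, ∀ i j, A i j = d i * ↑(d j)⁻¹ := by
  obtain ⟨p, q, hpq⟩ : ∃ p q, A p q ≠ 0 := by
    by_contra! h0
    exact hA (funext₂ h0)
  have hq : ∀ i, A i q ≠ 0 := fun i hi => hpq (by rw [h p q i, hi, mul_zero])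
  refine ⟨fun i => Units.mk0 _ (hq i), fun i j => ?_⟩
  simp [h i q j, mul_inv_cancel_right₀ (hq j)]

theorem of_mul_hadamard [Fintype m] [DecidableEq m] [CommSemiring α] (a b : m → α)
    (B : Matrix m m α) : of (fun i j => a i * b j) ⊙ B = diagonal a * B * diagonal b := by
  ext i j
  simp [mul_right_comm]

end Matrix

theorem schur_multiplicative_spectrum_preserving_general (n : ℕ)
    (A : Matrix (Fin n) (Fin n) ℂ) (hA : A ≠ 0)
    (hmul : ∀ B C : Matrix (Fin n) (Fin n) ℂ,
      Matrix.hadamard A (B * C) = Matrix.hadamard A B * Matrix.hadamard A C) :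
    ∀ B : Matrix (Fin n) (Fin n) ℂ,
      spectrum ℂ (Matrix.hadamard A B) = spectrum ℂ B := by
  intro B
  obtain ⟨d, hd⟩ := exists_units_apply_eq_mul_inv hA (apply_eq_mul_apply_of_hadamard_mul A hmul)
  let u : (Matrix (Fin n) (Fin n) ℂ)ˣ :=
    Units.map (diagonalRingHom (Fin n) ℂ).toMonoidHom (MulEquiv.piUnits.symm d)
  have hA_eq : A = of fun i j => (d i : ℂ) * ↑(d j)⁻¹ := by ext i j; exact hd i j
  have hconj :
      A ⊙ B = (u : Matrix (Fin n) (Fin n) ℂ) * B * (u⁻¹ : (Matrix (Fin n) (Fin n) ℂ)ˣ) := by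
    rw [hA_eq, of_mul_hadamard]
    rfl
  rw [hconj, spectrum.units_conjugate]

theorem schur_multiplicative_spectrum_preserving (n : ℕ) (hn : 0 < n)
    (A : Matrix (Fin n) (Fin n) ℂ) (hA : A ≠ 0)
    (hmul : ∀ B C : Matrix (Fin n) (Fin n) ℂ,
      Matrix.hadamard A (B * C) = Matrix.hadamard A B * Matrix.hadamard A C) :
    ∀ B : Matrix (Fin n) (Fin n) ℂ,
      spectrum ℂ (Matrix.hadamard A B) = spectrum ℂ B :=
  schur_multiplicative_spectrum_preserving_general n A hA hmul
end

section
/- Let n be a positive integer and let A ∈ M_n(ℂ) be a nonzero matrix such that the Schur map S_A is multiplicative. Then ‖A‖ ≥ n, where ‖·‖ is the operator norm on M_n(ℂ) induced by the Euclidean norm on ℂ^n (the spectral norm). If moreover A is Hermitian (A = A*), then ‖A‖ = n. -/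
/-!
Testing the multiplicativity of `B ↦ A ∘ B` on matrix units `Eᵢₖ Eₖⱼ = Eᵢⱼ` gives
`Aᵢⱼ = Aᵢₖ Aₖⱼ` for all `i, k, j`; summing over `k` yields `A² = n A`. Submultiplicativity of
the operator norm then gives `n ‖A‖ = ‖A²‖ ≤ ‖A‖²`, and when `A` is Hermitian the C*-identity
`‖A‖² = ‖A* A‖ = ‖A²‖` turns this into the equality `‖A‖ = n`.
-/

open Matrix

theorem Matrix.apply_eq_apply_mul_apply_of_hadamard_mul {ι R : Type*} [Fintype ι] [DecidableEq ι]
    [CommSemiring R] {A : Matrix ι ι R}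
    (hmul : ∀ B C : Matrix ι ι R, A ⊙ (B * C) = (A ⊙ B) * (A ⊙ C)) (i k j : ι) :
    A i j = A i k * A k j := by
  simpa [single_mul_single_same, hadamard_apply, mul_apply, single] using
    congrFun (congrFun (hmul (single i k 1) (single k j 1)) i) j

theorem Matrix.mul_self_eq_card_smul_of_apply_eq_apply_mul_apply {ι R : Type*} [Fintype ι]
    [CommSemiring R] {A : Matrix ι ι R} (hA : ∀ i k j, A i j = A i k * A k j) :
    A * A = Fintype.card ι • A := by
  ext i j
  simp [mul_apply, ← hA]

section NormedRing

variable {𝕜 E : Type*} [NormedField 𝕜] [NonUnitalNormedRing E] [NormedSpace 𝕜 E]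

theorem norm_le_norm_of_mul_self_eq_smul {a : E} {c : 𝕜} (ha : a ≠ 0) (h : a * a = c • a) :
    ‖c‖ ≤ ‖a‖ := by
  refine le_of_mul_le_mul_right ?_ (norm_pos_iff.2 ha)
  calc ‖c‖ * ‖a‖ = ‖a * a‖ := by rw [h, norm_smul]
    _ ≤ ‖a‖ * ‖a‖ := norm_mul_le a a

theorem IsSelfAdjoint.norm_eq_of_mul_self_eq_smul [StarRing E] [CStarRing E] {a : E} {c : 𝕜}
    (hsa : IsSelfAdjoint a) (ha : a ≠ 0) (h : a * a = c • a) : ‖a‖ = ‖c‖ := by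
  refine mul_right_cancel₀ (norm_ne_zero_iff.2 ha) ?_
  calc ‖a‖ * ‖a‖ = ‖star a * a‖ := CStarRing.norm_star_mul_self.symm
    _ = ‖c‖ * ‖a‖ := by rw [hsa.star_eq, h, norm_smul]

end NormedRing

theorem schur_multiplicative_norm_ge_general (n : ℕ)
    (A : Matrix (Fin n) (Fin n) ℂ) (hA : A ≠ 0)
    (hmul : ∀ B C : Matrix (Fin n) (Fin n) ℂ,
      Matrix.hadamard A (B * C) = Matrix.hadamard A B * Matrix.hadamard A C) :
    (n : ℝ) ≤ ‖Matrix.toEuclideanCLM (𝕜 := ℂ) A‖ ∧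
      (Aᴴ = A → ‖Matrix.toEuclideanCLM (𝕜 := ℂ) A‖ = n) := by
  set T := toEuclideanCLM (𝕜 := ℂ) A
  have hT : T ≠ 0 := (map_ne_zero_iff _ (toEuclideanCLM (𝕜 := ℂ)).injective).2 hA
  have hTT : T * T = (n : ℂ) • T := by
    rw [← map_mul, mul_self_eq_card_smul_of_apply_eq_apply_mul_apply
      (apply_eq_apply_mul_apply_of_hadamard_mul hmul), Fintype.card_fin, ← Nat.cast_smul_eq_nsmul ℂ,
      map_smul]
  refine ⟨?_, fun hherm => ?_⟩
  · simpa using norm_le_norm_of_mul_self_eq_smul hT hTT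
  · have hsa : IsSelfAdjoint T := by
      rw [IsSelfAdjoint, ← map_star]
      exact congrArg _ hherm
    simpa using hsa.norm_eq_of_mul_self_eq_smul hT hTT

theorem schur_multiplicative_norm_ge (n : ℕ) (hn : 0 < n)
    (A : Matrix (Fin n) (Fin n) ℂ) (hA : A ≠ 0)
    (hmul : ∀ B C : Matrix (Fin n) (Fin n) ℂ,
      Matrix.hadamard A (B * C) = Matrix.hadamard A B * Matrix.hadamard A C) :
    (n : ℝ) ≤ ‖Matrix.toEuclideanCLM (𝕜 := ℂ) A‖ ∧
      (Aᴴ = A → ‖Matrix.toEuclideanCLM (𝕜 := ℂ) A‖ = n) :=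
  schur_multiplicative_norm_ge_general n A hA hmul
end

section
/- Let n be a positive integer and let A ∈ M_n(ℂ) be a nonzero Hermitian matrix (A = A*) such that the Schur map S_A is multiplicative. Then there exists a diagonal unitary matrix U ∈ M_n(ℂ) such that A ∘ B = U B U* for every B ∈ M_n(ℂ). -/
/-!
Testing multiplicativity of `B ↦ A ⊙ B` on matrix units `Eᵢₖ Eₖⱼ = Eᵢⱼ` gives
`A i j = A i k * A k j` for all `i, k, j`. Then each diagonal entry is idempotent, and a zero
diagonal entry would force `A = 0`, so `A i i = 1`. Fixing a column `i₀` and writing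
`u k = A k i₀`, Hermitian symmetry turns the factorization through `i₀` into
`A i j = u i * conj (u j)`, and `|u k|² = A k k = 1`; hence `A ⊙ B = D B D*` with `D = diag u`.
-/

open Matrix

namespace Matrix

variable {ι α : Type*}

theorem apply_eq_apply_mul_apply_of_hadamard_mul_s7 [Fintype ι] [DecidableEq ι] [Semiring α]
    {A : Matrix ι ι α} (hmul : ∀ B C : Matrix ι ι α, A ⊙ (B * C) = A ⊙ B * A ⊙ C)
    (i k j : ι) :
    A i j = A i k * A k j := by
  simpa [hadamard, mul_apply, single_apply, Finset.sum_ite_eq, ite_and] using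
    congrFun (congrFun (hmul (single i k 1) (single k j 1)) i) j

theorem diag_eq_one_of_apply_eq_apply_mul_apply [MonoidWithZero α] [IsLeftCancelMulZero α]
    {A : Matrix ι ι α} (hfac : ∀ i k j, A i j = A i k * A k j) (hA : A ≠ 0) (k : ι) :
    A k k = 1 := by
  have hidem : IsIdempotentElem (A k k) := (hfac k k k).symm
  refine (IsIdempotentElem.iff_eq_zero_or_one.mp hidem).resolve_left fun hk => hA ?_
  ext i j
  rw [hfac i k j, hfac k k j, hk, zero_mul, mul_zero, zero_apply]

theorem vecMulVec_hadamard [Fintype ι] [DecidableEq ι] [CommSemiring α]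
    (u v : ι → α) (B : Matrix ι ι α) :
    vecMulVec u v ⊙ B = diagonal u * B * diagonal v := by
  ext i j
  simp only [hadamard_apply, vecMulVec_apply, mul_diagonal, diagonal_mul]
  ring

theorem diagonal_mem_unitaryGroup [Fintype ι] [DecidableEq ι] [CommRing α] [StarRing α]
    {u : ι → α} (hu : ∀ i, u i * star (u i) = 1) : diagonal u ∈ unitaryGroup ι α := by
  rw [mem_unitaryGroup_iff, star_eq_conjTranspose, diagonal_conjTranspose,
    diagonal_mul_diagonal, ← diagonal_one]
  exact congrArg diagonal (funext hu)

end Matrix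

theorem schur_multiplicative_hermitian_unitary_conjugation_general (n : ℕ)
    (A : Matrix (Fin n) (Fin n) ℂ) (hA : A ≠ 0) (hherm : Aᴴ = A)
    (hmul : ∀ B C : Matrix (Fin n) (Fin n) ℂ,
      Matrix.hadamard A (B * C) = Matrix.hadamard A B * Matrix.hadamard A C) :
    ∃ U : Matrix (Fin n) (Fin n) ℂ,
      U ∈ Matrix.unitaryGroup (Fin n) ℂ ∧ U.IsDiag ∧
      ∀ B : Matrix (Fin n) (Fin n) ℂ, Matrix.hadamard A B = U * B * Uᴴ := by
  have hfac := apply_eq_apply_mul_apply_of_hadamard_mul_s7 hmul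
  have hdiag := diag_eq_one_of_apply_eq_apply_mul_apply hfac hA
  obtain ⟨i₀, -⟩ := Function.ne_iff.mp hA
  set u : Fin n → ℂ := fun k => A k i₀
  have hrow : ∀ j, A i₀ j = star (u j) := fun j => by
    rw [← hherm, conjTranspose_apply]
  have hA_eq : A = vecMulVec u (star u) := by
    ext i j
    rw [hfac i i₀ j, hrow, vecMulVec_apply, Pi.star_apply]
  have hu : ∀ k, u k * star (u k) = 1 := fun k => by
    rw [← hrow, ← hfac, hdiag]
  refine ⟨diagonal u, diagonal_mem_unitaryGroup hu, isDiag_diagonal u, fun B => ?_⟩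
  rw [hA_eq, vecMulVec_hadamard, diagonal_conjTranspose]

theorem schur_multiplicative_hermitian_unitary_conjugation (n : ℕ) (hn : 0 < n)
    (A : Matrix (Fin n) (Fin n) ℂ) (hA : A ≠ 0) (hherm : Aᴴ = A)
    (hmul : ∀ B C : Matrix (Fin n) (Fin n) ℂ,
      Matrix.hadamard A (B * C) = Matrix.hadamard A B * Matrix.hadamard A C) :
    ∃ U : Matrix (Fin n) (Fin n) ℂ,
      U ∈ Matrix.unitaryGroup (Fin n) ℂ ∧ U.IsDiag ∧
      ∀ B : Matrix (Fin n) (Fin n) ℂ, Matrix.hadamard A B = U * B * Uᴴ :=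
  schur_multiplicative_hermitian_unitary_conjugation_general n A hA hherm hmul
end

section
/- Let n be a positive integer and let A ∈ M_n(ℂ) have all diagonal entries equal to 1. Then the Schur map S_A is multiplicative and *-preserving (i.e., S_A(B*) = S_A(B)* for all B, equivalently A is Hermitian) if and only if A has rank one and every entry of A has modulus 1. -/
/-!
Testing on matrix units `E_ij E_jk = E_ik` shows that `S_A` is multiplicative exactly when
`A i j * A j k = A i k` for all `i j k`, and testing `S_A(E_ij*)` shows that `S_A` is
`*`-preserving exactly when `A` is Hermitian. Given the unit diagonal, this cocycle identity says
that column `k` of `A` is `A j k` times column `j`, i.e. that `A` has rank one, and it gives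
`A j i = (A i j)⁻¹`, which equals `conj (A i j)` exactly when `‖A i j‖ = 1`.
-/

open Matrix ComplexConjugate

theorem RCLike.conj_eq_iff_norm_eq_one_of_mul_eq_one {𝕜 : Type*} [RCLike 𝕜] {z w : 𝕜}
    (h : z * w = 1) : conj z = w ↔ ‖z‖ = 1 := by
  rw [← inv_eq_of_mul_eq_one_right h]
  refine ⟨fun hz => ?_, fun hz => (RCLike.inv_eq_conj hz).symm⟩
  have hnorm_sq : (‖z‖ : 𝕜) ^ 2 = 1 := by
    rw [← RCLike.mul_conj, hz, mul_inv_cancel₀ (left_ne_zero_of_mul_eq_one h)]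
  exact (pow_eq_one_iff_of_nonneg (norm_nonneg z) two_ne_zero).mp (by exact_mod_cast hnorm_sq)

namespace Matrix

variable {ι : Type*}

theorem hadamard_mul_eq_mul_hadamard_iff {R : Type*} [Fintype ι] [DecidableEq ι]
    [CommSemiring R] (A : Matrix ι ι R) :
    (∀ B C : Matrix ι ι R, A ⊙ (B * C) = A ⊙ B * A ⊙ C) ↔
      ∀ i j k, A i j * A j k = A i k := by
  refine ⟨fun h i j k => ?_, fun h B C => ?_⟩
  · have hik := congr_fun₂ (h (single i j 1) (single j k 1)) i k
    simpa [hadamard_apply, mul_apply, single_apply, eq_comm] using hik.symm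
  · ext i k
    simp only [hadamard_apply, mul_apply, Finset.mul_sum]
    refine Finset.sum_congr rfl fun j _ => ?_
    rw [← h i j k]
    ring

theorem hadamard_conjTranspose_eq_iff {R : Type*} [DecidableEq ι] [CommSemiring R] [StarRing R]
    (A : Matrix ι ι R) :
    (∀ B : Matrix ι ι R, A ⊙ Bᴴ = (A ⊙ B)ᴴ) ↔ A.IsHermitian := by
  rw [IsHermitian.ext_iff]
  refine ⟨fun h i j => ?_, fun h B => ?_⟩
  · simpa [hadamard_apply, conjTranspose_apply, single_apply] using
      (congr_fun₂ (h (single j i 1)) i j).symm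
  · ext i j
    simp only [hadamard_apply, conjTranspose_apply, star_mul', h]

theorem isHermitian_iff_forall_norm_eq_one {𝕜 : Type*} [RCLike 𝕜] {A : Matrix ι ι 𝕜}
    (hinv : ∀ i j, A i j * A j i = 1) : A.IsHermitian ↔ ∀ i j, ‖A i j‖ = 1 := by
  rw [IsHermitian.ext_iff, forall_comm]
  exact forall₂_congr fun j i => RCLike.conj_eq_iff_norm_eq_one_of_mul_eq_one (hinv j i)

theorem rank_eq_one_iff_forall_col_mem_span {K m n : Type*} [Field K] [Finite m] [Fintype n]
    (A : Matrix m n K) {j : n} (hj : A.col j ≠ 0) :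
    A.rank = 1 ↔ ∀ k, A.col k ∈ K ∙ A.col j := by
  have hle : (K ∙ A.col j) ≤ Submodule.span K (Set.range A.col) :=
    Submodule.span_mono (Set.singleton_subset_iff.mpr ⟨j, rfl⟩)
  rw [rank_eq_finrank_span_cols]
  constructor
  · intro h k
    rw [Submodule.eq_of_le_of_finrank_eq hle (by rw [finrank_span_singleton hj, h])]
    exact Submodule.subset_span ⟨k, rfl⟩
  · intro h
    rw [le_antisymm (Submodule.span_le.mpr (Set.range_subset_iff.mpr h)) hle,
      finrank_span_singleton hj]

theorem rank_eq_one_iff_mul_eq {K : Type*} [Field K] [Fintype ι] [Nonempty ι]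
    {A : Matrix ι ι K} (hdiag : ∀ i, A i i = 1) :
    A.rank = 1 ↔ ∀ i j k, A i j * A j k = A i k := by
  have hcol (j : ι) : A.col j ≠ 0 := fun h => by simpa [hdiag] using congr_fun h j
  constructor
  · intro h i j k
    obtain ⟨c, hc⟩ := Submodule.mem_span_singleton.mp
      ((rank_eq_one_iff_forall_col_mem_span A (hcol j)).mp h k)
    have hjk : c = A j k := by simpa [hdiag] using congr_fun hc j
    have hik : c * A i j = A i k := by simpa using congr_fun hc i
    rw [← hik, hjk, mul_comm]
  · intro h
    let j := Classical.arbitrary ι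
    refine (rank_eq_one_iff_forall_col_mem_span A (hcol j)).mpr fun k =>
      Submodule.mem_span_singleton.mpr ⟨A j k, ?_⟩
    ext i
    simp [← h i j k, mul_comm]

end Matrix

theorem schur_mult_star_preserving_iff_rank_one_unimodular (n : ℕ) (hn : 0 < n)
    (A : Matrix (Fin n) (Fin n) ℂ) (hdiag : ∀ i, A i i = 1) :
    ((∀ B C : Matrix (Fin n) (Fin n) ℂ,
        Matrix.hadamard A (B * C) = Matrix.hadamard A B * Matrix.hadamard A C) ∧
      (∀ B : Matrix (Fin n) (Fin n) ℂ,
        Matrix.hadamard A Bᴴ = (Matrix.hadamard A B)ᴴ)) ↔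
    (A.rank = 1 ∧ ∀ i j, ‖A i j‖ = 1) := by
  have : Nonempty (Fin n) := ⟨⟨0, hn⟩⟩
  rw [hadamard_mul_eq_mul_hadamard_iff, hadamard_conjTranspose_eq_iff,
    rank_eq_one_iff_mul_eq hdiag]
  exact and_congr_right fun hmul =>
    isHermitian_iff_forall_norm_eq_one fun i j => (hmul i j i).trans (hdiag i)
end

section
/- Let n be a positive integer and let A ∈ M_n(ℂ) be nonzero. Then S_A is multiplicative and *-preserving (S_A(B*) = S_A(B)* for all B) and all diagonal entries of A equal 1, if and only if all entries of A are nonzero, A is positive semidefinite, the entrywise inverse A^{[-1]} is positive semidefinite, and all diagonal entries of A equal 1. -/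
/-!
Multiplicativity of `B ↦ A ∘ B` says exactly that `A i k = A i j * A j k` for all `i j k`, and
`*`-preservation says that `A` is Hermitian. With a unit diagonal these force `A = v v*` with
`|v i| = 1`, so `A` is positive semidefinite and its entrywise inverse is `Aᵀ`.

Conversely, let `A` be positive semidefinite with unit diagonal and put `x = e i - A j i • e j`.
Then `x* A x = 1 - |A i j|²`, so `|A i j| ≤ 1`; the same bound for the entrywise inverse gives
`|A i j| = 1`. Hence `x* A x = 0`, so `A x = 0`, and the `k`-th entry of `A x = 0` is
`A k i = A k j * A j i`.
-/

open Matrix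
open scoped ComplexOrder

namespace Matrix

section Hadamard

variable {n α : Type*}

theorem forall_hadamard_mul_eq_iff [Fintype n] [DecidableEq n] [CommSemiring α]
    {A : Matrix n n α} :
    (∀ B C : Matrix n n α, hadamard A (B * C) = hadamard A B * hadamard A C) ↔
      ∀ i j k, A i k = A i j * A j k := by
  refine ⟨fun h i j k => ?_, fun h B C => ?_⟩
  · simpa [hadamard, mul_apply, single] using
      congr_fun₂ (h (single i j 1) (single j k 1)) i k
  · ext i k
    simp only [hadamard_apply, mul_apply, Finset.mul_sum]
    exact Finset.sum_congr rfl fun j _ => by rw [h i j k]; ring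

theorem forall_hadamard_conjTranspose_eq_iff [DecidableEq n] [CommSemiring α] [StarRing α]
    {A : Matrix n n α} :
    (∀ B : Matrix n n α, hadamard A Bᴴ = (hadamard A B)ᴴ) ↔ A.IsHermitian := by
  refine ⟨fun h => IsHermitian.ext fun i j => ?_, fun h B => ?_⟩
  · simpa [hadamard, single] using (congr_fun₂ (h (single j i 1)) i j).symm
  · ext i j
    simp [← h.apply i j]

end Hadamard

theorem of_inv_eq_transpose {n α : Type*} [DivisionMonoid α] {A : Matrix n n α}
    (h : ∀ i j, A i j * A j i = 1) : of (fun i j => (A i j)⁻¹) = Aᵀ := by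
  ext i j
  exact inv_eq_of_mul_eq_one_right (h i j)

theorem IsHermitian.posSemidef_of_cocycle {n R : Type*} [Fintype n] [CommRing R]
    [PartialOrder R] [StarRing R] [StarOrderedRing R] {A : Matrix n n R} (hH : A.IsHermitian)
    (hA : ∀ i j k, A i k = A i j * A j k) : A.PosSemidef := by
  rcases isEmpty_or_nonempty n with _ | ⟨⟨j⟩⟩
  · exact Subsingleton.elim 0 A ▸ PosSemidef.zero
  · have hA_eq : A = vecMulVec (fun i => A i j) (star fun i => A i j) := by
      ext i k
      simp [vecMulVec_apply, hA i j k, hH.apply]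
    exact hA_eq ▸ posSemidef_vecMulVec_self_star _

theorem IsHermitian.star_dotProduct_mulVec_single_sub_single {n R : Type*} [Fintype n]
    [DecidableEq n] [CommRing R] [StarRing R] {A : Matrix n n R} (hA : A.IsHermitian)
    {i j : n} (hj : A j j = 1) :
    star (Pi.single i 1 - Pi.single j (A j i)) ⬝ᵥ A *ᵥ (Pi.single i 1 - Pi.single j (A j i)) =
      A i i - A i j * A j i := by
  simp [mulVec_sub, mulVec_single, dotProduct_sub, sub_dotProduct, single_dotProduct, hj, hA.apply]

namespace PosSemidef

variable {n 𝕜 : Type*} [Fintype n] [DecidableEq n] [RCLike 𝕜] {A : Matrix n n 𝕜}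

theorem mul_apply_swap_le_one (hA : A.PosSemidef) (hD : ∀ i, A i i = 1) (i j : n) :
    A i j * A j i ≤ 1 := by
  have := hA.dotProduct_mulVec_nonneg (Pi.single i 1 - Pi.single j (A j i))
  rwa [hA.isHermitian.star_dotProduct_mulVec_single_sub_single (hD j), hD i, sub_nonneg] at this

theorem apply_eq_mul_of_mul_apply_swap_eq_one (hA : A.PosSemidef) (hD : ∀ i, A i i = 1)
    {i j : n} (h : A i j * A j i = 1) (k : n) : A k i = A k j * A j i := by
  have hx := (hA.dotProduct_mulVec_zero_iff (Pi.single i 1 - Pi.single j (A j i))).1 (by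
    rw [hA.isHermitian.star_dotProduct_mulVec_single_sub_single (hD j), hD i, h, sub_self])
  rw [mul_comm]
  simpa [mulVec_sub, mulVec_single, sub_eq_zero] using congr_fun hx k

theorem mul_apply_swap_eq_one_of_posSemidef_inv (hA : A.PosSemidef)
    (hA' : (of fun i j => (A i j)⁻¹).PosSemidef) (hD : ∀ i, A i i = 1) (hA0 : ∀ i j, A i j ≠ 0)
    (i j : n) : A i j * A j i = 1 := by
  have hpos : 0 < A i j * A j i := by
    rw [← hA.isHermitian.apply i j]
    exact star_mul_self_pos (.of_ne_zero (hA0 j i))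
  have hinv_le := hA'.mul_apply_swap_le_one (by simp [hD]) i j
  simp only [of_apply, ← mul_inv] at hinv_le
  exact le_antisymm (hA.mul_apply_swap_le_one hD i j) ((inv_le_one₀ hpos).1 hinv_le)

end PosSemidef

end Matrix

theorem schur_mult_star_preserving_iff_posSemidef_general (n : ℕ)
    (A : Matrix (Fin n) (Fin n) ℂ) :
    ((∀ B C : Matrix (Fin n) (Fin n) ℂ,
        Matrix.hadamard A (B * C) = Matrix.hadamard A B * Matrix.hadamard A C) ∧
      (∀ B : Matrix (Fin n) (Fin n) ℂ,
        Matrix.hadamard A Bᴴ = (Matrix.hadamard A B)ᴴ) ∧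
      (∀ i, A i i = 1)) ↔
    ((∀ i j, A i j ≠ 0) ∧ A.PosSemidef ∧
      (Matrix.of fun i j => (A i j)⁻¹ : Matrix (Fin n) (Fin n) ℂ).PosSemidef ∧
      (∀ i, A i i = 1)) := by
  rw [forall_hadamard_mul_eq_iff, forall_hadamard_conjTranspose_eq_iff]
  constructor
  · rintro ⟨hA, hH, hD⟩
    have hunit : ∀ i j, A i j * A j i = 1 := fun i j => (hA i j i).symm.trans (hD i)
    have hpsd := hH.posSemidef_of_cocycle hA
    exact ⟨fun i j => left_ne_zero_of_mul_eq_one (hunit i j), hpsd,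
      of_inv_eq_transpose hunit ▸ hpsd.transpose, hD⟩
  · rintro ⟨hA0, hA, hA', hD⟩
    exact ⟨fun k j i => hA.apply_eq_mul_of_mul_apply_swap_eq_one hD
      (hA.mul_apply_swap_eq_one_of_posSemidef_inv hA' hD hA0 i j) k, hA.isHermitian, hD⟩

theorem schur_mult_star_preserving_iff_posSemidef (n : ℕ) (hn : 0 < n)
    (A : Matrix (Fin n) (Fin n) ℂ) (hA : A ≠ 0) :
    ((∀ B C : Matrix (Fin n) (Fin n) ℂ,
        Matrix.hadamard A (B * C) = Matrix.hadamard A B * Matrix.hadamard A C) ∧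
      (∀ B : Matrix (Fin n) (Fin n) ℂ,
        Matrix.hadamard A Bᴴ = (Matrix.hadamard A B)ᴴ) ∧
      (∀ i, A i i = 1)) ↔
    ((∀ i j, A i j ≠ 0) ∧ A.PosSemidef ∧
      (Matrix.of fun i j => (A i j)⁻¹ : Matrix (Fin n) (Fin n) ℂ).PosSemidef ∧
      (∀ i, A i i = 1)) :=
  schur_mult_star_preserving_iff_posSemidef_general n A
end

section
/- Let F be a field and n a positive integer. Consider the set L of nonzero matrices A ∈ M_n(F) whose Schur map S_A is multiplicative. Then: (1) the all-ones matrix J belongs to L (and S_J is the identity map); (2) if A, B ∈ L then the Schur product A ∘ B belongs to L; (3) if A ∈ L then every entry of A is nonzero and the entrywise inverse A^{[-1]} belongs to L, with A ∘ A^{[-1]} = J. In particular, (L, ∘) is an abelian group with identity J. -/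
/-!
Testing the identity `A ⊙ (B * C) = (A ⊙ B) * (A ⊙ C)` on matrix units shows that `S_A` is
multiplicative exactly when `A i j = A i k * A k j` for all `i, k, j`. This condition is visibly
preserved by entrywise products and entrywise inverses, and it propagates a single nonzero entry
to all of them, since `A p q = A p i * A i j * A j q`.
-/

open Matrix

namespace Matrix

variable {ι R : Type*}

theorem ne_zero_of_forall_apply_ne_zero [Nonempty ι] [Zero R] {A : Matrix ι ι R}
    (hA : ∀ i j, A i j ≠ 0) : A ≠ 0 := by
  inhabit ι
  exact fun h => hA default default (by rw [h, zero_apply])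

variable [Fintype ι]

def IsSchurMultiplicative [Mul R] [AddCommMonoid R] (A : Matrix ι ι R) : Prop :=
  ∀ B C : Matrix ι ι R, A ⊙ (B * C) = A ⊙ B * A ⊙ C

theorem isSchurMultiplicative_iff [DecidableEq ι] [CommSemiring R] {A : Matrix ι ι R} :
    IsSchurMultiplicative A ↔ ∀ i k j, A i j = A i k * A k j := by
  constructor
  · intro hA i k j
    simpa [hadamard_apply, mul_apply, single_apply, ite_and] using
      congr_fun₂ (hA (single i k 1) (single k j 1)) i j
  · intro hA B C
    ext i j
    simp only [hadamard_apply, mul_apply, Finset.mul_sum]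
    refine Finset.sum_congr rfl fun k _ => ?_
    rw [hA i k j]
    ring

theorem isSchurMultiplicative_of_one [NonAssocSemiring R] :
    IsSchurMultiplicative (of 1 : Matrix ι ι R) := by
  intro B C
  simp only [of_one_hadamard]

variable [DecidableEq ι]

theorem IsSchurMultiplicative.hadamard [CommSemiring R] {A B : Matrix ι ι R}
    (hA : IsSchurMultiplicative A) (hB : IsSchurMultiplicative B) :
    IsSchurMultiplicative (A ⊙ B) := by
  rw [isSchurMultiplicative_iff] at *
  intro i k j
  simp only [hadamard_apply]
  rw [hA i k j, hB i k j]
  ring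

theorem IsSchurMultiplicative.inv [Semifield R] {A : Matrix ι ι R}
    (hA : IsSchurMultiplicative A) : IsSchurMultiplicative (of fun i j => (A i j)⁻¹) := by
  rw [isSchurMultiplicative_iff] at *
  intro i k j
  simp only [of_apply, hA i k j, mul_inv]

theorem IsSchurMultiplicative.apply_ne_zero [CommSemiring R] {A : Matrix ι ι R}
    (hA : IsSchurMultiplicative A) (hA0 : A ≠ 0) (i j : ι) : A i j ≠ 0 := by
  rw [isSchurMultiplicative_iff] at hA
  obtain ⟨p, q, hpq⟩ : ∃ p q, A p q ≠ 0 := by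
    by_contra! h
    exact hA0 (ext h)
  intro hij
  apply hpq
  rw [hA p i q, hA i j q, hij, zero_mul, mul_zero]

end Matrix

theorem schur_multiplicative_matrices_abelian_group
    (F : Type*) [Field F] (n : ℕ) (hn : 0 < n)
    (L : Set (Matrix (Fin n) (Fin n) F))
    (hL : L = {A | A ≠ 0 ∧ ∀ B C : Matrix (Fin n) (Fin n) F,
      Matrix.hadamard A (B * C) = Matrix.hadamard A B * Matrix.hadamard A C}) :
    -- (1) the all-ones matrix J belongs to L, and S_J is the identity map
    ((Matrix.of fun _ _ => (1 : F)) ∈ L ∧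
      ∀ B : Matrix (Fin n) (Fin n) F,
        Matrix.hadamard (Matrix.of fun _ _ => (1 : F)) B = B) ∧
    -- (2) L is closed under the Schur product
    (∀ A ∈ L, ∀ B ∈ L, Matrix.hadamard A B ∈ L) ∧
    -- (3) entrywise inverses: every entry is nonzero, the entrywise inverse
    -- belongs to L, and Schur-multiplying by it gives J
    (∀ A ∈ L, (∀ i j, A i j ≠ 0) ∧
      (Matrix.of fun i j => (A i j)⁻¹ : Matrix (Fin n) (Fin n) F) ∈ L ∧
      Matrix.hadamard A (Matrix.of fun i j => (A i j)⁻¹) =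
        Matrix.of fun _ _ => (1 : F)) ∧
    -- in particular, (L, ∘) is an abelian group with identity J:
    -- commutativity and associativity of the Schur product on L
    (∀ A ∈ L, ∀ B ∈ L, Matrix.hadamard A B = Matrix.hadamard B A) ∧
    (∀ A ∈ L, ∀ B ∈ L, ∀ C ∈ L,
      Matrix.hadamard (Matrix.hadamard A B) C =
        Matrix.hadamard A (Matrix.hadamard B C)) := by
  subst hL
  have : Nonempty (Fin n) := ⟨⟨0, hn⟩⟩
  refine ⟨⟨⟨ne_zero_of_forall_apply_ne_zero fun _ _ => one_ne_zero,
    isSchurMultiplicative_of_one⟩, of_one_hadamard⟩, ?_, ?_,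
    fun A _ B _ => hadamard_comm A B, fun A _ B _ C _ => hadamard_assoc A B C⟩
  · rintro A ⟨hA0, hA : IsSchurMultiplicative A⟩ B ⟨hB0, hB : IsSchurMultiplicative B⟩
    refine ⟨ne_zero_of_forall_apply_ne_zero fun i j => ?_, hA.hadamard hB⟩
    exact mul_ne_zero (hA.apply_ne_zero hA0 i j) (hB.apply_ne_zero hB0 i j)
  · rintro A ⟨hA0, hA : IsSchurMultiplicative A⟩
    have hA_ne := hA.apply_ne_zero hA0
    refine ⟨hA_ne, ⟨ne_zero_of_forall_apply_ne_zero fun i j => inv_ne_zero (hA_ne i j),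
      hA.inv⟩, ?_⟩
    ext i j
    exact mul_inv_cancel₀ (hA_ne i j)
end

section
/- Let A : ℕ × ℕ → ℂ be an infinite matrix such that A(i,i) = 1 for all i and every column of A is a scalar multiple of the first column (equivalently, A(i,j) = A(i,k)·A(k,j) for all i, j, k). Then A is not bounded in the operator norm: there is no continuous linear operator T on the Hilbert space ℓ²(ℕ, ℂ) whose matrix coefficients are the entries of A, i.e., satisfying ⟨e_i, T e_j⟩ = A(i,j) for all i, j, where (e_i) is the standard orthonormal basis of ℓ²(ℕ, ℂ). -/
/-!
Column `0` of `A` is the coordinate sequence of `T e₀`, hence square-summable and tending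
to zero, while row `0` consists of matrix coefficients `⟪e₀, T eᵢ⟫`, bounded by `‖T‖`.
Consistency forces `A i 0 * A 0 i = A i i = 1`, which cannot tend to zero.
-/

open Filter Topology
open scoped InnerProductSpace ENNReal

theorem mul_flip_eq_one_of_consistent {ι M : Type*} [Monoid M] {A : ι → ι → M}
    (hdiag : ∀ i, A i i = 1) (hcons : ∀ i j k, A i j = A i k * A k j) (i k : ι) :
    A i k * A k i = 1 :=
  (hcons i i k).symm.trans (hdiag i)

theorem Memℓp.tendsto_norm_cofinite_zero {α : Type*} {E : α → Type*}
    [∀ i, NormedAddCommGroup (E i)] {p : ℝ≥0∞} {f : ∀ i, E i} (hf : Memℓp f p)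
    (hp : 0 < p.toReal) : Tendsto (fun i => ‖f i‖) cofinite (𝓝 0) := by
  have hpow := ((hf.summable hp).tendsto_cofinite_zero).rpow_const (p := p.toReal⁻¹)
    (Or.inr (inv_nonneg.2 hp.le))
  rw [Real.zero_rpow (inv_ne_zero hp.ne')] at hpow
  exact hpow.congr fun i => Real.rpow_rpow_inv (norm_nonneg _) hp.ne'

theorem ContinuousLinearMap.norm_inner_apply_le {𝕜 E F : Type*} [RCLike 𝕜]
    [SeminormedAddCommGroup E] [NormedSpace 𝕜 E] [SeminormedAddCommGroup F]
    [InnerProductSpace 𝕜 F] (T : E →L[𝕜] F) (x : F) (y : E) :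
    ‖⟪x, T y⟫_𝕜‖ ≤ ‖x‖ * (‖T‖ * ‖y‖) :=
  (norm_inner_le_norm x (T y)).trans (mul_le_mul_of_nonneg_left (T.le_opNorm y) (norm_nonneg x))

namespace lp

variable {ι 𝕜 : Type*} [DecidableEq ι] [RCLike 𝕜]

theorem inner_single_one_left (i : ι) (f : lp (fun _ : ι => 𝕜) 2) :
    ⟪lp.single 2 i (1 : 𝕜), f⟫_𝕜 = f i := by
  simp [lp.inner_single_left]

theorem norm_inner_single_one_apply_single_one_le
    (T : lp (fun _ : ι => 𝕜) 2 →L[𝕜] lp (fun _ : ι => 𝕜) 2) (i j : ι) :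
    ‖⟪lp.single 2 i (1 : 𝕜), T (lp.single 2 j 1)⟫_𝕜‖ ≤ ‖T‖ := by
  simpa [lp.norm_single] using T.norm_inner_apply_le (lp.single 2 i 1) (lp.single 2 j 1)

end lp

theorem consistent_infinite_matrix_unbounded
    (A : ℕ → ℕ → ℂ) (hdiag : ∀ i, A i i = 1)
    (hcons : ∀ i j k, A i j = A i k * A k j) :
    ¬ ∃ T : lp (fun _ : ℕ => ℂ) 2 →L[ℂ] lp (fun _ : ℕ => ℂ) 2,
      ∀ i j : ℕ, ⟪lp.single 2 i (1 : ℂ), T (lp.single 2 j (1 : ℂ))⟫_ℂ = A i j := by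
  rintro ⟨T, hT⟩
  have hcol : Tendsto (fun i => A i 0) atTop (𝓝 0) := by
    rw [tendsto_zero_iff_norm_tendsto_zero]
    simpa [← hT, lp.inner_single_one_left, Nat.cofinite_eq_atTop] using
      (lp.memℓp (T (lp.single 2 0 1))).tendsto_norm_cofinite_zero (by norm_num)
  have hrow : ∀ i, ‖A 0 i‖ ≤ ‖T‖ := fun i =>
    hT 0 i ▸ lp.norm_inner_single_one_apply_single_one_le T 0 i
  have hprod : Tendsto (fun i => A i 0 * A 0 i) atTop (𝓝 0) :=
    hcol.zero_mul_isBoundedUnder_le (g := fun i => A 0 i)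
      ⟨‖T‖, eventually_map.2 (Eventually.of_forall hrow)⟩
  simp [mul_flip_eq_one_of_consistent hdiag hcons] at hprod
end
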